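/- Let C ≥ 1 and D be natural numbers. Let p : Fin C → ℝ be a probability vector with p_s > 0 for all s, for each s ∈ Fin C let q_s : {0,…,D} → ℝ be a probability vector, and let z : Fin C → Fin C → ℝ be a row-stochastic matrix (z_{sr} ≥ 0 and Σ_r z_{sr} = 1 for each s). On Ω = {n : Fin C → ℕ | Σ_k n_k ≤ D} define for each s the probability mass function P_s(n) = q_s(|n|) · (|n|! / Π_k n_k!) · Π_k z_{sk}^{n_k}, where |n| = Σ_k n_k, and define the mixture m(n) = Σ_{s=1}^{C} p_s P_s(n). Then the Shannon entropy of m satisfies H(m) ≥ Σ_{s=1}^{C} p_s H(P_s) − Σ_{s=1}^{C} p_s ln( Σ_{r=1}^{C} p_r ( Σ_{d=0}^{D} √(q_s(d) q_r(d)) · (Σ_{k=1}^{C} √(z_{sk} z_{rk}))^d ) ). -/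

import Mathlib

/-!
Put `g = ∑ r, p r * √(P r)` and `B s = ∑ r, p r * BC(P s, P r)`, so that
`B s = ∑ n, √(P s n) * g n ≥ p s`. Then `H(m) - ∑ s, p s * H(P s) + ∑ s, p s * log (B s)` is the
sum of two relative entropies, each nonnegative by Gibbs' inequality: that of `P s` from the
probability vector `√(P s) * g / B s` (weighted by `p s`), and that of the joint law
`p s * P s n` from the sub-probability `p s * √(P s n) * m n / g n`. For degree-weighted
multinomials, both the normalisation and the Bhattacharyya coefficients follow from the
multinomial theorem applied degree by degree.
-/

open Finset Real

noncomputable section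

variable {ι α : Type*}

def shannonEntropy (Ω : Finset α) (a : α → ℝ) : ℝ := -∑ n ∈ Ω, a n * log (a n)

def bhattacharyyaCoeff (Ω : Finset α) (a b : α → ℝ) : ℝ := ∑ n ∈ Ω, √(a n * b n)

def mixture [Fintype ι] (p : ι → ℝ) (P : ι → α → ℝ) (n : α) : ℝ := ∑ s, p s * P s n

def boundedConfigs (ι : Type*) [Fintype ι] [DecidableEq ι] (D : ℕ) : Finset (ι → ℕ) :=
  (Fintype.piFinset fun _ : ι => range (D + 1)).filter fun n => ∑ k, n k ≤ D

def degreeMultinomial [Fintype ι] (Q : ℕ → ℝ) (x : ι → ℝ) (n : ι → ℕ) : ℝ :=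
  Q (∑ k, n k) * Nat.multinomial univ n * ∏ k, x k ^ n k

end

theorem mul_log_le_mul_log_add_sub {w v : ℝ} (hw : 0 ≤ w) (hv : 0 ≤ v) (hwv : 0 < w → 0 < v) :
    w * log v ≤ w * log w + (v - w) := by
  rcases hw.eq_or_lt with rfl | hw
  · simpa using hv
  have hv := hwv hw
  calc w * log v = w * log w + w * log (v / w) := by rw [log_div hv.ne' hw.ne']; ring
    _ ≤ w * log w + w * (v / w - 1) := by gcongr; exact log_le_sub_one_of_pos (by positivity)
    _ = w * log w + (v - w) := by field_simp

theorem sum_mul_log_le_sum_mul_log {ι : Type*} (s : Finset ι) {w v : ι → ℝ}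
    (hw : ∀ i ∈ s, 0 ≤ w i) (hv : ∀ i ∈ s, 0 ≤ v i) (hwv : ∀ i ∈ s, 0 < w i → 0 < v i)
    (hsum : ∑ i ∈ s, v i ≤ ∑ i ∈ s, w i) :
    ∑ i ∈ s, w i * log (v i) ≤ ∑ i ∈ s, w i * log (w i) := by
  have := sum_le_sum fun i hi => mul_log_le_mul_log_add_sub (hw i hi) (hv i hi) (hwv i hi)
  rw [sum_add_distrib, sum_sub_distrib] at this
  linarith

section DegreeMultinomial

variable {ι : Type*} [Fintype ι]

theorem degreeMultinomial_nonneg {Q : ℕ → ℝ} {x : ι → ℝ} (hQ : ∀ d, 0 ≤ Q d) (hx : ∀ k, 0 ≤ x k)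
    (n : ι → ℕ) : 0 ≤ degreeMultinomial Q x n := by
  unfold degreeMultinomial
  have := prod_nonneg fun k (_ : k ∈ univ) => pow_nonneg (hx k) (n k)
  have := hQ (∑ k, n k)
  positivity

theorem sqrt_degreeMultinomial_mul {Q Q' : ℕ → ℝ} {x x' : ι → ℝ} (hQ : ∀ d, 0 ≤ Q d)
    (hQ' : ∀ d, 0 ≤ Q' d) (hx : ∀ k, 0 ≤ x k) (hx' : ∀ k, 0 ≤ x' k) (n : ι → ℕ) :
    √(degreeMultinomial Q x n * degreeMultinomial Q' x' n)
      = degreeMultinomial (fun d => √(Q d * Q' d)) (fun k => √(x k * x' k)) n := by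
  rw [← sqrt_sq (degreeMultinomial_nonneg (fun d => sqrt_nonneg _) (fun k => sqrt_nonneg _) n)]
  congr 1
  have hprod : (∏ k, √(x k * x' k) ^ n k) ^ 2 = (∏ k, x k ^ n k) * ∏ k, x' k ^ n k := by
    rw [← prod_pow, ← prod_mul_distrib]
    refine prod_congr rfl fun k _ => ?_
    rw [← pow_mul, mul_comm (n k), pow_mul, sq_sqrt (mul_nonneg (hx k) (hx' k)), mul_pow]
  simp only [degreeMultinomial, mul_pow, hprod, sq_sqrt (mul_nonneg (hQ _) (hQ' _))]
  ring

theorem sum_boundedConfigs_degreeMultinomial [DecidableEq ι] (D : ℕ) (Q : ℕ → ℝ) (x : ι → ℝ) :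
    ∑ n ∈ boundedConfigs ι D, degreeMultinomial Q x n
      = ∑ d ∈ range (D + 1), Q d * (∑ k, x k) ^ d := by
  have hmaps : ∀ n ∈ boundedConfigs ι D, ∑ k, n k ∈ range (D + 1) := fun n hn =>
    mem_range_succ_iff.2 (mem_filter.1 hn).2
  rw [← sum_fiberwise_of_maps_to hmaps]
  refine sum_congr rfl fun d hd => ?_
  have hfiber : {n ∈ boundedConfigs ι D | ∑ k, n k = d} = piAntidiag univ d := by
    ext n
    simp only [boundedConfigs, mem_filter, Fintype.mem_piFinset, mem_range, mem_piAntidiag,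
      mem_univ, implies_true, and_true, and_iff_right_iff_imp]
    rintro rfl
    have hsum := mem_range_succ_iff.1 hd
    exact ⟨fun k => Nat.lt_succ_of_le
      ((single_le_sum (fun _ _ => Nat.zero_le _) (mem_univ k)).trans hsum), hsum⟩
  rw [hfiber, sum_pow_eq_sum_piAntidiag, mul_sum]
  refine sum_congr rfl fun n hn => ?_
  rw [degreeMultinomial, (mem_piAntidiag.1 hn).1]
  ring

end DegreeMultinomial
section Mixture

variable {ι α : Type*} [Fintype ι] {Ω : Finset α} {p : ι → ℝ} {P : ι → α → ℝ}

theorem mixture_nonneg (hp : ∀ s, 0 ≤ p s) (hP : ∀ s n, 0 ≤ P s n) (n : α) :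
    0 ≤ mixture p P n :=
  sum_nonneg fun s _ => mul_nonneg (hp s) (hP s n)

theorem mul_le_mixture (hp : ∀ s, 0 ≤ p s) (hP : ∀ s n, 0 ≤ P s n) (s : ι) (n : α) :
    p s * P s n ≤ mixture p P n :=
  single_le_sum (f := fun r => p r * P r n) (fun r _ => mul_nonneg (hp r) (hP r n)) (mem_univ s)

theorem bhattacharyyaCoeff_self {a : α → ℝ} (ha : ∀ n, 0 ≤ a n) :
    bhattacharyyaCoeff Ω a a = ∑ n ∈ Ω, a n :=
  sum_congr rfl fun n _ => sqrt_mul_self (ha n)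

theorem le_sum_mul_bhattacharyyaCoeff (hp : ∀ s, 0 ≤ p s) (hP : ∀ s n, 0 ≤ P s n)
    (hP1 : ∀ s, ∑ n ∈ Ω, P s n = 1) (s : ι) :
    p s ≤ ∑ r, p r * bhattacharyyaCoeff Ω (P s) (P r) := by
  have := single_le_sum (f := fun r => p r * bhattacharyyaCoeff Ω (P s) (P r))
    (fun r _ => mul_nonneg (hp r) (sum_nonneg fun _ _ => sqrt_nonneg _)) (mem_univ s)
  rwa [bhattacharyyaCoeff_self (hP s), hP1, mul_one] at this

theorem sum_sqrt_mul_mixture_sqrt (hP : ∀ s n, 0 ≤ P s n) (s : ι) :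
    ∑ n ∈ Ω, √(P s n) * mixture p (fun r n => √(P r n)) n
      = ∑ r, p r * bhattacharyyaCoeff Ω (P s) (P r) := by
  simp only [mixture, bhattacharyyaCoeff, mul_sum, sqrt_mul (hP s _)]
  rw [sum_comm]
  exact sum_congr rfl fun r _ => sum_congr rfl fun n _ => by ring

theorem sum_mul_log_sqrt_mul_mixture_sqrt_le (hp : ∀ s, 0 ≤ p s) (hP : ∀ s n, 0 ≤ P s n)
    (hP1 : ∀ s, ∑ n ∈ Ω, P s n = 1) {s : ι} (hs : 0 < p s) :
    ∑ n ∈ Ω, P s n * log (√(P s n) * mixture p (fun r n => √(P r n)) n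
        / ∑ r, p r * bhattacharyyaCoeff Ω (P s) (P r))
      ≤ ∑ n ∈ Ω, P s n * log (P s n) := by
  have hB := hs.trans_le (le_sum_mul_bhattacharyyaCoeff hp hP hP1 s)
  have hsqrt : ∀ r n, 0 ≤ √(P r n) := fun _ _ => sqrt_nonneg _
  refine sum_mul_log_le_sum_mul_log Ω (fun n _ => hP s n)
    (fun n _ => div_nonneg (mul_nonneg (hsqrt s n) (mixture_nonneg hp hsqrt n)) hB.le)
    (fun n _ hn => div_pos (mul_pos (sqrt_pos.2 hn) ?_) hB) ?_
  · exact (mul_pos hs (sqrt_pos.2 hn)).trans_le (mul_le_mixture hp hsqrt s n)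
  · rw [← sum_div, sum_sqrt_mul_mixture_sqrt hP, div_self hB.ne', hP1]

theorem sum_sum_mul_log_mixture_div_mixture_sqrt_le (hp : ∀ s, 0 ≤ p s)
    (hP : ∀ s n, 0 ≤ P s n) :
    ∑ s, ∑ n ∈ Ω, p s * P s n
        * log (p s * √(P s n) * (mixture p P n / mixture p (fun r n => √(P r n)) n))
      ≤ ∑ s, ∑ n ∈ Ω, p s * P s n * log (p s * P s n) := by
  set m := mixture p P
  set g := mixture p fun r n => √(P r n)
  have hsqrt : ∀ r n, 0 ≤ √(P r n) := fun _ _ => sqrt_nonneg _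
  rw [← sum_product', ← sum_product']
  refine sum_mul_log_le_sum_mul_log _ (fun sn _ => mul_nonneg (hp _) (hP _ _))
    (fun sn _ => mul_nonneg (mul_nonneg (hp _) (hsqrt _ _))
      (div_nonneg (mixture_nonneg hp hP _) (mixture_nonneg hp hsqrt _)))
    (fun ⟨s, n⟩ _ h => ?_) ?_
  · have hs := pos_of_mul_pos_left h (hP s n)
    have hn := sqrt_pos.2 (pos_of_mul_pos_right h (hp s))
    exact mul_pos (mul_pos hs hn) (div_pos (h.trans_le (mul_le_mixture hp hP s n))
      ((mul_pos hs hn).trans_le (mul_le_mixture hp hsqrt s n)))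
  · simp only [sum_product]
    rw [sum_comm, sum_comm (s := univ)]
    refine sum_le_sum fun n _ => ?_
    rw [← sum_mul]
    change g n * (m n / g n) ≤ m n
    rcases eq_or_ne (g n) 0 with h | h
    · simpa [h] using mixture_nonneg hp hP n
    · rw [mul_div_cancel₀ _ h]

theorem mul_log_mixture_eq (hp : ∀ s, 0 ≤ p s) (hP : ∀ s n, 0 ≤ P s n)
    (hP1 : ∀ s, ∑ n ∈ Ω, P s n = 1) (s : ι) (n : α) :
    p s * P s n * log (mixture p P n)
      = p s * P s n * log (√(P s n) * mixture p (fun r n => √(P r n)) n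
          / ∑ r, p r * bhattacharyyaCoeff Ω (P s) (P r))
        + p s * P s n
          * log (p s * √(P s n) * (mixture p P n / mixture p (fun r n => √(P r n)) n))
        - p s * P s n * log (p s * P s n)
        + p s * P s n * log (∑ r, p r * bhattacharyyaCoeff Ω (P s) (P r)) := by
  rcases (mul_nonneg (hp s) (hP s n)).eq_or_lt with h | h
  · simp only [← h, zero_mul]; ring
  have hs := pos_of_mul_pos_left h (hP s n)
  have hn := pos_of_mul_pos_right h (hp s)
  have hsn := sqrt_pos.2 hn
  have hg := (mul_pos hs hsn).trans_le (mul_le_mixture hp (fun _ _ => sqrt_nonneg _) s n)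
  have hm := h.trans_le (mul_le_mixture hp hP s n)
  have hB := hs.trans_le (le_sum_mul_bhattacharyyaCoeff hp hP hP1 s)
  rw [log_div (by positivity) hB.ne', log_mul hsn.ne' hg.ne', log_mul (by positivity) (by positivity),
    log_mul hs.ne' hsn.ne', log_div hm.ne' hg.ne', log_mul hs.ne' hn.ne', log_sqrt hn.le]
  ring

theorem le_shannonEntropy_mixture (hp : ∀ s, 0 ≤ p s) (hP : ∀ s n, 0 ≤ P s n)
    (hP1 : ∀ s, ∑ n ∈ Ω, P s n = 1) :
    ∑ s, p s * shannonEntropy Ω (P s)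
        - ∑ s, p s * log (∑ r, p r * bhattacharyyaCoeff Ω (P s) (P r))
      ≤ shannonEntropy Ω (mixture p P) := by
  have hjoint := sum_sum_mul_log_mixture_div_mixture_sqrt_le (Ω := Ω) hp hP
  have hsplit := mul_log_mixture_eq hp hP hP1
  set m := mixture p P
  set g := mixture p fun r n => √(P r n)
  have hlabel : ∀ s, ∑ n ∈ Ω, p s * P s n
        * log (√(P s n) * g n / ∑ r, p r * bhattacharyyaCoeff Ω (P s) (P r))
      ≤ ∑ n ∈ Ω, p s * P s n * log (P s n) := by
    intro s
    simp only [mul_assoc, ← mul_sum]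
    rcases (hp s).eq_or_lt with h | h
    · simp [← h]
    · exact mul_le_mul_of_nonneg_left (sum_mul_log_sqrt_mul_mixture_sqrt_le hp hP hP1 h) h.le
  have hmix : ∑ n ∈ Ω, m n * log (m n) = ∑ s, ∑ n ∈ Ω, p s * P s n * log (m n) := by
    simp only [m, mixture, sum_mul]
    exact sum_comm
  have hlogB : ∀ s, ∑ n ∈ Ω, p s * P s n * log (∑ r, p r * bhattacharyyaCoeff Ω (P s) (P r))
      = p s * log (∑ r, p r * bhattacharyyaCoeff Ω (P s) (P r)) := by
    intro s
    rw [← sum_mul, ← mul_sum, hP1, mul_one]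
  have hent : ∀ s, p s * shannonEntropy Ω (P s) = -∑ n ∈ Ω, p s * P s n * log (P s n) := by
    intro s
    simp only [shannonEntropy, mul_neg, mul_sum, mul_assoc]
  rw [sum_congr rfl fun s _ => hent s, shannonEntropy, hmix]
  simp only [hsplit, sum_add_distrib, sum_sub_distrib, hlogB, sum_neg_distrib]
  linarith [sum_le_sum fun s (_ : s ∈ univ) => hlabel s]

end Mixture

theorem mixture_configuration_entropy_lower_bound_general
    (C D : ℕ)
    (p : Fin C → ℝ) (hp_pos : ∀ s, 0 < p s)
    (q : Fin C → ℕ → ℝ) (hq_nonneg : ∀ s d, 0 ≤ q s d)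
    (hq_sum : ∀ s, ∑ d ∈ Finset.range (D + 1), q s d = 1)
    (z : Fin C → Fin C → ℝ) (hz_nonneg : ∀ s r, 0 ≤ z s r)
    (hz_sum : ∀ s, ∑ r, z s r = 1)
    -- the space of neighborhood label configurations of size at most `D`
    (Ω : Finset (Fin C → ℕ))
    (hΩ : Ω = (Fintype.piFinset fun _ : Fin C => Finset.range (D + 1)).filter
        (fun n => ∑ k, n k ≤ D))
    -- the degree-weighted multinomial probability mass function for each label `s`
    (P : Fin C → (Fin C → ℕ) → ℝ)
    (hP : ∀ s n, P s n =
      q s (∑ k, n k) * (Nat.multinomial Finset.univ n : ℝ) * ∏ k, z s k ^ n k)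
    -- the mixture distribution over configurations
    (m : (Fin C → ℕ) → ℝ) (hm : ∀ n, m n = ∑ s, p s * P s n)
    -- Shannon entropy of a probability mass function on `Ω`
    (H : ((Fin C → ℕ) → ℝ) → ℝ)
    (hH : ∀ a : (Fin C → ℕ) → ℝ, H a = -∑ n ∈ Ω, a n * Real.log (a n)) :
    H m ≥ ∑ s, p s * H (P s)
      - ∑ s, p s * Real.log (∑ r, p r *
          (∑ d ∈ Finset.range (D + 1), Real.sqrt (q s d * q r d) *
            (∑ k, Real.sqrt (z s k * z r k)) ^ d)) := by
  have hΩ' : Ω = boundedConfigs (Fin C) D := hΩ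
  have hPq : ∀ s, P s = degreeMultinomial (q s) (z s) := fun s => funext (hP s)
  have hPnn : ∀ s n, 0 ≤ P s n := fun s n => by
    rw [hPq]; exact degreeMultinomial_nonneg (hq_nonneg s) (hz_nonneg s) n
  have hP1 : ∀ s, ∑ n ∈ Ω, P s n = 1 := fun s => by
    simpa [hΩ', hPq, sum_boundedConfigs_degreeMultinomial, hz_sum] using hq_sum s
  have hBC : ∀ s r, bhattacharyyaCoeff Ω (P s) (P r) = ∑ d ∈ range (D + 1),
      √(q s d * q r d) * (∑ k, √(z s k * z r k)) ^ d := fun s r => by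
    simp only [bhattacharyyaCoeff, hΩ', hPq, sqrt_degreeMultinomial_mul (hq_nonneg s)
      (hq_nonneg r) (hz_nonneg s) (hz_nonneg r), sum_boundedConfigs_degreeMultinomial]
  have hm' : m = mixture p P := funext hm
  have hH' : H = shannonEntropy Ω := funext hH
  rw [hm', hH', ge_iff_le]
  simpa only [hBC] using le_shannonEntropy_mixture (fun s => (hp_pos s).le) hPnn hP1

/-- **Final displayed inequality of Appendix B**: the entropy of the marginal distribution
over neighborhood label configurations (a mixture over labels of degree-weighted multinomials)
is bounded below via the closed-form Bhattacharyya coefficients. -/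
theorem mixture_configuration_entropy_lower_bound
    (C D : ℕ) (hC : 1 ≤ C)
    (p : Fin C → ℝ) (hp_pos : ∀ s, 0 < p s) (hp_sum : ∑ s, p s = 1)
    (q : Fin C → ℕ → ℝ) (hq_nonneg : ∀ s d, 0 ≤ q s d)
    (hq_sum : ∀ s, ∑ d ∈ Finset.range (D + 1), q s d = 1)
    (z : Fin C → Fin C → ℝ) (hz_nonneg : ∀ s r, 0 ≤ z s r)
    (hz_sum : ∀ s, ∑ r, z s r = 1)
    -- the space of neighborhood label configurations of size at most `D`
    (Ω : Finset (Fin C → ℕ))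
    (hΩ : Ω = (Fintype.piFinset fun _ : Fin C => Finset.range (D + 1)).filter
        (fun n => ∑ k, n k ≤ D))
    -- the degree-weighted multinomial probability mass function for each label `s`
    (P : Fin C → (Fin C → ℕ) → ℝ)
    (hP : ∀ s n, P s n =
      q s (∑ k, n k) * (Nat.multinomial Finset.univ n : ℝ) * ∏ k, z s k ^ n k)
    -- the mixture distribution over configurations
    (m : (Fin C → ℕ) → ℝ) (hm : ∀ n, m n = ∑ s, p s * P s n)
    -- Shannon entropy of a probability mass function on `Ω`
    (H : ((Fin C → ℕ) → ℝ) → ℝ)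
    (hH : ∀ a : (Fin C → ℕ) → ℝ, H a = -∑ n ∈ Ω, a n * Real.log (a n)) :
    H m ≥ ∑ s, p s * H (P s)
      - ∑ s, p s * Real.log (∑ r, p r *
          (∑ d ∈ Finset.range (D + 1), Real.sqrt (q s d * q r d) *
            (∑ k, Real.sqrt (z s k * z r k)) ^ d)) :=
  mixture_configuration_entropy_lower_bound_general C D p hp_pos q hq_nonneg hq_sum z hz_nonneg
    hz_sum Ω hΩ P hP m hm H hH
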